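/- Let k, r be nonnegative integers with n = k + r and let a = (a_1,…,a_r) be an arbitrary sequence of r nonnegative integers. Then for every integer d with n − k < d ≤ n, the elementary symmetric polynomial e_d(x_1,…,x_n) annihilates the a-superspace Vandermonde; that is, ∂(e_d)(Δ_n(a)) = 0 in superspace. -/

import Mathlib

open MvPolynomial

/-- Superspace of rank `n`: elements are represented by their coefficients on the
basis of `θ`-monomials `θ_S` (for `S` a subset of `Fin n`, with factors in increasing order),
with coefficients in the polynomial ring `ℚ[x_1, …, x_n]`. -/
abbrev Superspace (n : ℕ) := Finset (Fin n) → MvPolynomial (Fin n) ℚ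

/-- The partial derivative `∂_i` with respect to the commuting variable `x_i`,
treating the `θ`-variables as constants. -/
noncomputable def xDeriv {n : ℕ} (i : Fin n) (F : Superspace n) : Superspace n :=
  fun S => MvPolynomial.pderiv i (F S)

/-- The partial derivative `∂_i^θ` with respect to the anticommuting variable `θ_i`:
it is `ℚ[x]`-linear and sends `θ_{j_1} ⋯ θ_{j_r}` (with `j_1 < ⋯ < j_r`) to
`(-1)^{s-1} θ_{j_1} ⋯ ω(θ_{j_s}) ⋯ θ_{j_r}` if `j_s = i`, and to `0` if `i` does not occur. -/
noncomputable def thetaDeriv {n : ℕ} (i : Fin n) (F : Superspace n) : Superspace n :=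
  fun S => if i ∈ S then 0
    else ((-1 : ℚ) ^ (S.filter (fun j => j < i)).card) • F (insert i S)

/-- The differential operator `∂(p)` (replace each `x_i` in `p` by `∂_i`) applied to `q`. -/
noncomputable def diffOp {n : ℕ} (p q : MvPolynomial (Fin n) ℚ) : MvPolynomial (Fin n) ℚ :=
  ∑ a ∈ p.support, ∑ b ∈ q.support,
    (p.coeff a * q.coeff b * ∏ i : Fin n, ((b i).descFactorial (a i) : ℚ)) •
      MvPolynomial.monomial (b - a) (1 : ℚ)

/-- The action of the polynomial ring `ℚ[x_1, …, x_n]` on superspace, `f · g := ∂(f)(g)`. -/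
noncomputable def pAct {n : ℕ} (p : MvPolynomial (Fin n) ℚ) (F : Superspace n) : Superspace n :=
  fun S => diffOp p (F S)

/-- Iterated `θ`-derivative along a list (leftmost applied last). -/
noncomputable def thetaDerivList {n : ℕ} (l : List (Fin n)) (F : Superspace n) : Superspace n :=
  l.foldr thetaDeriv F

/-- The action of superspace on itself, `f · g := ∂(f)(g)`, where `∂(f)` is obtained
from `f` by replacing every `x_i` by `∂_i` and every `θ_i` by `∂_i^θ`. -/
noncomputable def superAct {n : ℕ} (f g : Superspace n) : Superspace n :=
  ∑ T : Finset (Fin n), (fun S => diffOp (f T) (thetaDerivList (T.sort (· ≤ ·)) g S))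

/-- The diagonal action of a permutation `w` on superspace:
`w · x_i = x_{w(i)}` and `w · θ_i = θ_{w(i)}`. -/
noncomputable def permAct {n : ℕ} (w : Equiv.Perm (Fin n)) (F : Superspace n) : Superspace n :=
  fun S =>
    ((-1 : ℚ) ^ (((S.image w.symm) ×ˢ (S.image w.symm)).filter
        (fun p => p.1 < p.2 ∧ w p.2 < w p.1)).card) •
      MvPolynomial.rename w (F (S.image w.symm))

/-- The supermonomial `x^a · θ_T`. -/
noncomputable def sMono {n : ℕ} (a : Fin n →₀ ℕ) (T : Finset (Fin n)) : Superspace n :=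
  fun S => if S = T then MvPolynomial.monomial a (1 : ℚ) else 0

/-- The `a`-superspace Vandermonde
`Δ_n(a) = ε_n · (x_1^{a_1} ⋯ x_r^{a_r} x_{r+1}^{k-1} ⋯ x_n^0 · θ_1 ⋯ θ_r)` (with `n = k + r`). -/
noncomputable def superVandermonde (n r : ℕ) (a : Fin r → ℕ) : Superspace n :=
  ∑ w : Equiv.Perm (Fin n),
    ((Equiv.Perm.sign w : ℤ) : ℚ) •
      permAct w (sMono
        (Finsupp.equivFunOnFinite.symm
          (fun i : Fin n => if h : (i : ℕ) < r then a ⟨(i : ℕ), h⟩ else n - 1 - (i : ℕ)))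
        (Finset.univ.filter (fun i : Fin n => (i : ℕ) < r)))

/-- Multiplication in superspace (the `θ`-variables anticommute). -/
noncomputable def superMul {n : ℕ} (F G : Superspace n) : Superspace n :=
  fun S => ∑ T ∈ S.powerset,
    ((-1 : ℚ) ^ ((T ×ˢ (S \ T)).filter (fun p => p.2 < p.1)).card) • (F T * G (S \ T))

/-- The bilinear form `⟨f, g⟩` = constant term of `∂(f)(g)`. -/
noncomputable def superPairing {n : ℕ} (f g : Superspace n) : ℚ :=
  MvPolynomial.constantCoeff (superAct f g ∅)

/-- `V_n(a)`: the smallest subspace of superspace containing `Δ_n(a)` which is closed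
under the partial derivatives `∂_1, …, ∂_n`. -/
noncomputable def Vspace (n r : ℕ) (a : Fin r → ℕ) : Submodule ℚ (Superspace n) :=
  sInf {W : Submodule ℚ (Superspace n) |
    superVandermonde n r a ∈ W ∧ ∀ i : Fin n, ∀ F ∈ W, xDeriv i F ∈ W}

/-- `W_n(a)`: the smallest subspace of superspace containing `Δ_n(a)` which is closed
under `∂_1, …, ∂_n` and `∂_1^θ, …, ∂_n^θ`. -/
noncomputable def Wspace (n r : ℕ) (a : Fin r → ℕ) : Submodule ℚ (Superspace n) :=
  sInf {W : Submodule ℚ (Superspace n) |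
    superVandermonde n r a ∈ W ∧ (∀ i : Fin n, ∀ F ∈ W, xDeriv i F ∈ W) ∧
      (∀ i : Fin n, ∀ F ∈ W, thetaDeriv i F ∈ W)}

/-- A superpolynomial is `θ`-homogeneous of `θ`-degree `r`. -/
def isThetaHomog {n : ℕ} (r : ℕ) (F : Superspace n) : Prop :=
  ∀ S : Finset (Fin n), S.card ≠ r → F S = 0

/-- An `(n,k,s)`-staircase: a shuffle of `(s-1, …, s-1)` (`n-k` copies) with
`(k-1, k-2, …, 1, 0)`; `T` records the positions of the decreasing staircase part. -/
def isStaircase3 (n k s : ℕ) (b : Fin n → ℕ) : Prop :=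
  ∃ T : Finset (Fin n), T.card = k ∧
    ∀ i : Fin n, b i = if i ∈ T then k - 1 - (T.filter (fun j => j < i)).card else s - 1

/-- `(n,k,s)`-substaircase sequences: componentwise `≤` at least one `(n,k,s)`-staircase. -/
def isSubstaircase3 (n k s : ℕ) (c : Fin n → ℕ) : Prop :=
  ∃ b : Fin n → ℕ, isStaircase3 n k s b ∧ ∀ i, c i ≤ b i

/-- The (signless) Stirling numbers of the second kind. -/
def stirling2 : ℕ → ℕ → ℕ
  | 0, 0 => 1
  | 0, _ + 1 => 0
  | _ + 1, 0 => 0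
  | n + 1, k + 1 => stirling2 n k + (k + 1) * stirling2 n (k + 1)

/-- The ideal `I_{n,k,s} = ⟨x_1^s, …, x_n^s, e_n, e_{n-1}, …, e_{n-k+1}⟩`. -/
noncomputable def Inks (n k s : ℕ) : Ideal (MvPolynomial (Fin n) ℚ) :=
  Ideal.span ((Set.range fun i : Fin n => (MvPolynomial.X i : MvPolynomial (Fin n) ℚ) ^ s) ∪
    ((fun d => MvPolynomial.esymm (Fin n) ℚ d) '' {d : ℕ | n - k < d ∧ d ≤ n}))

/-- The `q`-number `[m]_q = 1 + q + ⋯ + q^{m-1}`. -/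
noncomputable def qNum (m : ℕ) : Polynomial ℕ := ∑ i ∈ Finset.range m, Polynomial.X ^ i

/-- The `q`-factorial `[k]!_q`. -/
noncomputable def qFactorial : ℕ → Polynomial ℕ
  | 0 => 1
  | m + 1 => qNum (m + 1) * qFactorial m

/-- The `q`-Stirling numbers `Stir_q(n,k)`. -/
noncomputable def qStirling : ℕ → ℕ → Polynomial ℕ
  | 0, 0 => 1
  | 0, _ + 1 => 0
  | _ + 1, 0 => 0
  | n + 1, k + 1 => qStirling n k + qNum (k + 1) * qStirling n (k + 1)

/-- The submodule of superspace of `x`-homogeneous elements of `x`-degree `d`. -/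
noncomputable def xHomogSub (n d : ℕ) : Submodule ℚ (Superspace n) :=
  Submodule.pi Set.univ
    (fun _ : Finset (Fin n) => MvPolynomial.homogeneousSubmodule (Fin n) ℚ d)

/-- The submodule of superspace of `θ`-homogeneous elements of `θ`-degree `j`. -/
noncomputable def thetaHomogSub (n j : ℕ) : Submodule ℚ (Superspace n) where
  carrier := {F | ∀ S : Finset (Fin n), S.card ≠ j → F S = 0}
  add_mem' := by
    intro F G hF hG S hS
    show F S + G S = 0
    rw [hF S hS, hG S hS, add_zero]
  zero_mem' := by intro S _; rfl
  smul_mem' := by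
    intro c F hF S hS
    show c • F S = 0
    rw [hF S hS, smul_zero]
/-!
Since `e_d` is symmetric, `∂(e_d)` commutes with the diagonal `S_n`-action, so `∂(e_d) Δ_n(a)` is the
antisymmetrization of `∂(e_d)(x^α θ_1 ⋯ θ_r) = ∑_{|S| = d} (∏_{i ∈ S} α_i) x^{α - 1_S} θ_1 ⋯ θ_r`,
where `α = (a_1, …, a_r, k - 1, …, 1, 0)`. If `∏_{i ∈ S} α_i ≠ 0`, then `|S| = d > r` forces `S` to contain
a staircase position `p > r` with `α_p ≥ 1`; for the largest one, `p + 1 ∉ S`, so `α - 1_S` takes the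
same value `k - 1 - (p - r)` at `p` and `p + 1`. The transposition `(p p+1)` then fixes
`x^{α - 1_S} θ_1 ⋯ θ_r`, and the antisymmetrizer kills it.
-/

open MvPolynomial Finset

section DiffOp

variable {n : ℕ}

theorem diffOp_eq_sum (p q : MvPolynomial (Fin n) ℚ) {P Q : Finset (Fin n →₀ ℕ)}
    (hP : p.support ⊆ P) (hQ : q.support ⊆ Q) :
    diffOp p q = ∑ a ∈ P, ∑ b ∈ Q,
      (p.coeff a * q.coeff b * ∏ i : Fin n, ((b i).descFactorial (a i) : ℚ)) •
        monomial (b - a) (1 : ℚ) := by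
  rw [diffOp, sum_subset hP fun a _ ha => sum_eq_zero fun b _ => by
    rw [notMem_support_iff.mp ha]; simp]
  exact sum_congr rfl fun a _ => sum_subset hQ fun b _ hb => by
    rw [notMem_support_iff.mp hb]; simp

theorem diffOp_add_left (p₁ p₂ q : MvPolynomial (Fin n) ℚ) :
    diffOp (p₁ + p₂) q = diffOp p₁ q + diffOp p₂ q := by
  rw [diffOp_eq_sum (p₁ + p₂) q support_add subset_rfl,
    diffOp_eq_sum p₁ q subset_union_left subset_rfl,
    diffOp_eq_sum p₂ q subset_union_right subset_rfl, ← sum_add_distrib]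
  refine sum_congr rfl fun a _ => ?_
  rw [← sum_add_distrib]
  refine sum_congr rfl fun b _ => ?_
  rw [coeff_add, add_mul, add_mul, add_smul]

theorem diffOp_add_right (p q₁ q₂ : MvPolynomial (Fin n) ℚ) :
    diffOp p (q₁ + q₂) = diffOp p q₁ + diffOp p q₂ := by
  rw [diffOp_eq_sum p (q₁ + q₂) subset_rfl support_add,
    diffOp_eq_sum p q₁ subset_rfl subset_union_left,
    diffOp_eq_sum p q₂ subset_rfl subset_union_right, ← sum_add_distrib]
  refine sum_congr rfl fun a _ => ?_
  rw [← sum_add_distrib]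
  refine sum_congr rfl fun b _ => ?_
  rw [coeff_add, mul_add, add_mul, add_smul]

theorem diffOp_smul_right (p : MvPolynomial (Fin n) ℚ) (c : ℚ) (q : MvPolynomial (Fin n) ℚ) :
    diffOp p (c • q) = c • diffOp p q := by
  rw [diffOp_eq_sum p (c • q) subset_rfl support_smul, diffOp, smul_sum]
  refine sum_congr rfl fun a _ => ?_
  rw [smul_sum]
  refine sum_congr rfl fun b _ => ?_
  rw [coeff_smul, smul_smul, smul_eq_mul]
  congr 1
  ring

theorem diffOp_zero_right (p : MvPolynomial (Fin n) ℚ) : diffOp p 0 = 0 := by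
  simpa using diffOp_smul_right p 0 0

theorem diffOp_sum_left {ι : Type*} (s : Finset ι) (f : ι → MvPolynomial (Fin n) ℚ)
    (q : MvPolynomial (Fin n) ℚ) :
    diffOp (∑ i ∈ s, f i) q = ∑ i ∈ s, diffOp (f i) q := by
  induction s using Finset.cons_induction with
  | empty => simp [diffOp]
  | cons j s hj ih => rw [sum_cons, diffOp_add_left, ih, sum_cons]

theorem diffOp_monomial_monomial (A B : Fin n →₀ ℕ) :
    diffOp (monomial A (1 : ℚ)) (monomial B 1) =
      (∏ i : Fin n, ((B i).descFactorial (A i) : ℚ)) • monomial (B - A) 1 := by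
  simp [diffOp, support_monomial]

theorem diffOp_rename (w : Equiv.Perm (Fin n)) (p q : MvPolynomial (Fin n) ℚ) :
    diffOp (rename w p) (rename w q) = rename w (diffOp p q) := by
  have hinj : Function.Injective (Finsupp.mapDomain (M := ℕ) w) :=
    Finsupp.mapDomain_injective w.injective
  simp only [diffOp, support_rename_of_injective w.injective, map_sum, map_smul,
    sum_image (M := MvPolynomial (Fin n) ℚ) fun _ _ _ _ h => hinj h,
    coeff_rename_mapDomain _ w.injective, rename_monomial]
  refine sum_congr rfl fun a _ => sum_congr rfl fun b _ => ?_
  have hprod : ∏ i, ((b.mapDomain w i).descFactorial (a.mapDomain w i) : ℚ) =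
      ∏ i, ((b i).descFactorial (a i) : ℚ) :=
    Fintype.prod_equiv w.symm _ _ fun i => by simp [Finsupp.mapDomain_equiv_apply]
  have hsub : b.mapDomain w - a.mapDomain w = (b - a).mapDomain w := by
    ext i
    simp [Finsupp.mapDomain_equiv_apply]
  rw [hprod, hsub]

theorem sum_single_one_apply {σ : Type*} [DecidableEq σ] (S : Finset σ) (i : σ) :
    (∑ j ∈ S, Finsupp.single j 1 : σ →₀ ℕ) i = if i ∈ S then 1 else 0 := by
  simp [Finsupp.finsetSum_apply, Finsupp.single_apply]

theorem diffOp_esymm_monomial (d : ℕ) (β : Fin n →₀ ℕ) :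
    diffOp (esymm (Fin n) ℚ d) (monomial β 1) =
      ∑ S ∈ powersetCard d univ,
        (∏ i ∈ S, (β i : ℚ)) • monomial (β - ∑ i ∈ S, Finsupp.single i 1) 1 := by
  rw [esymm_eq_sum_monomial, diffOp_sum_left]
  refine sum_congr rfl fun S _ => ?_
  rw [diffOp_monomial_monomial, ← Fintype.prod_ite_mem S]
  congr 1
  refine Fintype.prod_congr _ _ fun i => ?_
  rw [sum_single_one_apply]
  split_ifs <;> simp

end DiffOp

section Superspace

variable {n : ℕ}

noncomputable def pActLinear (p : MvPolynomial (Fin n) ℚ) : Superspace n →ₗ[ℚ] Superspace n where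
  toFun := pAct p
  map_add' F G := funext fun S => diffOp_add_right p (F S) (G S)
  map_smul' c F := funext fun S => diffOp_smul_right p c (F S)

theorem permAct_add (w : Equiv.Perm (Fin n)) (F G : Superspace n) :
    permAct w (F + G) = permAct w F + permAct w G :=
  funext fun S => by simp only [permAct, Pi.add_apply, map_add, smul_add]

theorem permAct_smul (w : Equiv.Perm (Fin n)) (c : ℚ) (F : Superspace n) :
    permAct w (c • F) = c • permAct w F :=
  funext fun S => by simp only [permAct, Pi.smul_apply, map_smul, smul_comm c]

theorem pAct_permAct_of_isSymmetric {p : MvPolynomial (Fin n) ℚ} (hp : p.IsSymmetric)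
    (w : Equiv.Perm (Fin n)) (F : Superspace n) :
    pAct p (permAct w F) = permAct w (pAct p F) :=
  funext fun S => by
    simp only [pAct, permAct]
    rw [diffOp_smul_right, ← diffOp_rename, hp w]

theorem permAct_sMono (w : Equiv.Perm (Fin n)) (β : Fin n →₀ ℕ) (T S : Finset (Fin n)) :
    permAct w (sMono β T) S =
      if S.image w.symm = T then
        ((-1 : ℚ) ^ ((T ×ˢ T).filter fun p => p.1 < p.2 ∧ w p.2 < w p.1).card) •
          monomial (β.mapDomain w) 1
      else 0 := by
  unfold permAct sMono
  split_ifs with h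
  · rw [h, rename_monomial]
  · rw [map_zero, smul_zero]

theorem permAct_mul_sMono_of_fixes {τ : Equiv.Perm (Fin n)} {T : Finset (Fin n)}
    {β : Fin n →₀ ℕ} (hτT : ∀ i ∈ T, τ i = i) (hτβ : β.mapDomain τ = β)
    (w : Equiv.Perm (Fin n)) :
    permAct (w * τ) (sMono β T) = permAct w (sMono β T) := by
  have hτT' : T.image τ.symm = T := by
    rw [image_congr (g := id) fun i hi => τ.symm_apply_eq.mpr (hτT i hi).symm, image_id]
  funext S
  have hcomp : S.image (w * τ).symm = (S.image w.symm).image τ.symm := by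
    rw [image_image]
    rfl
  have himage : S.image (w * τ).symm = T ↔ S.image w.symm = T := by
    rw [hcomp]
    refine ⟨fun h => ?_, fun h => by rw [h, hτT']⟩
    have h' := congrArg (image τ) h
    rwa [image_image, Equiv.self_comp_symm, image_id, image_congr (g := id) hτT, image_id] at h'
  have hinv : (T ×ˢ T).filter (fun p => p.1 < p.2 ∧ (w * τ) p.2 < (w * τ) p.1) =
      (T ×ˢ T).filter (fun p => p.1 < p.2 ∧ w p.2 < w p.1) :=
    filter_congr fun p hp => by
      rw [mem_product] at hp
      rw [Equiv.Perm.mul_apply, Equiv.Perm.mul_apply, hτT _ hp.1, hτT _ hp.2]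
  have hexp : β.mapDomain (w * τ) = β.mapDomain w := by
    rw [Equiv.Perm.coe_mul, Finsupp.mapDomain_comp, hτβ]
  rw [permAct_sMono, permAct_sMono, hinv, hexp]
  exact if_congr himage rfl rfl

theorem pAct_esymm_sMono (d : ℕ) (β : Fin n →₀ ℕ) (T : Finset (Fin n)) :
    pAct (esymm (Fin n) ℚ d) (sMono β T) =
      ∑ S ∈ powersetCard d univ,
        (∏ i ∈ S, (β i : ℚ)) • sMono (β - ∑ i ∈ S, Finsupp.single i 1) T := by
  funext U
  simp only [pAct, sMono, Finset.sum_apply, Pi.smul_apply]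
  split_ifs
  · exact diffOp_esymm_monomial d β
  · simp [diffOp_zero_right]

theorem sum_sign_smul_eq_zero_of_mul_swap {α R M : Type*} [DecidableEq α] [Fintype α] [Ring R]
    [AddCommGroup M] [Module R M] (f : Equiv.Perm α → M) {p q : α} (hpq : p ≠ q)
    (hf : ∀ w, f (w * Equiv.swap p q) = f w) :
    ∑ w, ((Equiv.Perm.sign w : ℤ) : R) • f w = 0 := by
  refine sum_involution (fun w _ => w * Equiv.swap p q) (fun w _ => ?_) (fun w _ _ => ?_)
    (fun _ _ => mem_univ _) (fun w _ => Equiv.mul_swap_mul_self p q w)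
  · rw [hf, Equiv.Perm.sign_mul, Equiv.Perm.sign_swap hpq]
    simp
  · simp [Equiv.swap_eq_one_iff, hpq]

noncomputable def antisymmetrize : Superspace n →ₗ[ℚ] Superspace n where
  toFun F := ∑ w : Equiv.Perm (Fin n), ((Equiv.Perm.sign w : ℤ) : ℚ) • permAct w F
  map_add' F G := by simp only [permAct_add, smul_add, sum_add_distrib]
  map_smul' c F := by simp only [permAct_smul, smul_comm _ c, smul_sum, RingHom.id_apply]

theorem pAct_antisymmetrize_of_isSymmetric {p : MvPolynomial (Fin n) ℚ} (hp : p.IsSymmetric)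
    (F : Superspace n) : pAct p (antisymmetrize F) = antisymmetrize (pAct p F) := by
  change pActLinear p (∑ w : Equiv.Perm (Fin n), _) = _
  simp only [map_sum, map_smul]
  exact sum_congr rfl fun w _ => congrArg _ (pAct_permAct_of_isSymmetric hp w F)

theorem antisymmetrize_sMono_eq_zero {β : Fin n →₀ ℕ} {T : Finset (Fin n)} {p q : Fin n}
    (hpq : p ≠ q) (hpT : p ∉ T) (hqT : q ∉ T) (hβ : β p = β q) :
    antisymmetrize (sMono β T) = 0 := by
  have hswapT : ∀ i ∈ T, Equiv.swap p q i = i := fun i hi =>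
    Equiv.swap_apply_of_ne_of_ne (by rintro rfl; exact hpT hi) (by rintro rfl; exact hqT hi)
  have hswapβ : β.mapDomain (Equiv.swap p q) = β := by
    ext i
    rw [Finsupp.mapDomain_equiv_apply, Equiv.symm_swap, Equiv.swap_apply_def]
    split_ifs <;> simp_all
  exact sum_sign_smul_eq_zero_of_mul_swap _ hpq (permAct_mul_sMono_of_fixes hswapT hswapβ)

end Superspace

section Staircase

variable {n r : ℕ}

noncomputable def vandermondeExponent (n r : ℕ) (a : Fin r → ℕ) : Fin n →₀ ℕ :=
  Finsupp.equivFunOnFinite.symm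
    (fun i : Fin n => if h : (i : ℕ) < r then a ⟨(i : ℕ), h⟩ else n - 1 - (i : ℕ))

theorem vandermondeExponent_apply_of_le (a : Fin r → ℕ) {i : Fin n} (hi : r ≤ (i : ℕ)) :
    vandermondeExponent n r a i = n - 1 - (i : ℕ) := by
  simp [vandermondeExponent, Nat.not_lt.mpr hi]

theorem exists_staircase_pair_tsub_eq (a : Fin r → ℕ) {S : Finset (Fin n)} (hrS : r < S.card)
    (hS : ∀ i ∈ S, vandermondeExponent n r a i ≠ 0) :
    ∃ p q : Fin n, p ≠ q ∧ r ≤ (p : ℕ) ∧ r ≤ (q : ℕ) ∧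
      (vandermondeExponent n r a - ∑ i ∈ S, Finsupp.single i 1 : Fin n →₀ ℕ) p =
        (vandermondeExponent n r a - ∑ i ∈ S, Finsupp.single i 1 : Fin n →₀ ℕ) q := by
  set D := S.filter fun i : Fin n => r ≤ (i : ℕ)
  have hD : D.Nonempty := by
    by_contra hempty
    have hlt : ∀ i ∈ S, (i : ℕ) ∈ range r := fun i hi => mem_range.mpr <| Nat.not_le.mp
      (filter_eq_empty_iff.mp (not_nonempty_iff_eq_empty.mp hempty) hi)
    have := card_le_card_of_injOn _ hlt Fin.val_injective.injOn
    rw [card_range] at this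
    omega
  obtain ⟨hpS, hpr⟩ := mem_filter.mp (D.max'_mem hD)
  set p := D.max' hD
  have hαp := vandermondeExponent_apply_of_le a hpr
  have hp1 : (p : ℕ) + 1 < n := by
    have := hS p hpS
    omega
  set q : Fin n := ⟨p + 1, hp1⟩
  have hqS : q ∉ S := fun hqS => by
    have := D.le_max' q (mem_filter.mpr ⟨hqS, by simp only [q]; omega⟩)
    rw [Fin.le_def] at this
    simp only [q] at this
    omega
  refine ⟨p, q, fun h => by simpa [q] using congrArg Fin.val h, hpr, by simp only [q]; omega, ?_⟩
  rw [Finsupp.tsub_apply, Finsupp.tsub_apply, sum_single_one_apply, sum_single_one_apply,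
    if_pos hpS, if_neg hqS, hαp, vandermondeExponent_apply_of_le a (by simp only [q]; omega)]
  simp only [q]
  omega

end Staircase

theorem elementarySymmetric_annihilates_superVandermonde_general
    (n k r : ℕ) (hn : n = k + r) (a : Fin r → ℕ) (d : ℕ)
    (hd1 : n - k < d) :
    pAct (MvPolynomial.esymm (Fin n) ℚ d) (superVandermonde n r a) = 0 := by
  have hΔ : superVandermonde n r a = antisymmetrize
      (sMono (vandermondeExponent n r a) (univ.filter fun i : Fin n => (i : ℕ) < r)) := rfl
  rw [hΔ, pAct_antisymmetrize_of_isSymmetric (esymm_isSymmetric _ _ d), pAct_esymm_sMono, map_sum]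
  refine sum_eq_zero fun S hS => ?_
  rw [map_smul]
  by_cases hzero : ∏ i ∈ S, (vandermondeExponent n r a i : ℚ) = 0
  · rw [hzero, zero_smul]
  have hrS : r < S.card := by
    rw [mem_powersetCard_univ.mp hS]
    omega
  obtain ⟨p, q, hpq, hp, hq, hβ⟩ := exists_staircase_pair_tsub_eq a hrS
    fun i hi h0 => hzero (prod_eq_zero hi (by rw [h0, Nat.cast_zero]))
  rw [antisymmetrize_sMono_eq_zero hpq (by simpa using hp) (by simpa using hq) hβ, smul_zero]

/-- Lemma 3.2: for `n = k + r` and any sequence `a` of `r` nonnegative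
integers, the elementary symmetric polynomial `e_d` annihilates `Δ_n(a)` for `n - k < d ≤ n`. -/
theorem elementarySymmetric_annihilates_superVandermonde
    (n k r : ℕ) (hn : n = k + r) (a : Fin r → ℕ) (d : ℕ)
    (hd1 : n - k < d) (hd2 : d ≤ n) :
    pAct (MvPolynomial.esymm (Fin n) ℚ d) (superVandermonde n r a) = 0 :=
  elementarySymmetric_annihilates_superVandermonde_general n k r hn a d hd1
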